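/- Let a ∈ (1.5, 2) be irrational and let n ∈ ℕ with Ostrowski representation Σ_k b_{k+1}q_k. Then the fractional remainder f(na) := na − m (where m is the unique natural number with na − m ∈ [1−a, 2−a)) equals Σ_k b_{k+1}β_k. -/

import Mathlib

/-!
The key identity is `β (k + 1) * ζ (k + 2) = -β k`; since `ζ (k + 1) > 1` for irrational `a`, the
`β k` alternate strictly in sign, positive at even `k`. With the recurrence
`β (k + 2) = a_{k+2} β (k + 1) + β k` and the digit bounds `b k ≤ a_k`, the partial sums of
`Σ b_{k+1} β_k` telescope to lie between `β (2J) - β 0` and `β (2J + 1) - β 1`, so the sum lies in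
`[-β 0, -β 1)`, which is `[1 - a, 2 - a)` because `a_0 = a_1 = 1` for `a ∈ (3/2, 2)`. The sum also
equals `n a - Σ b_{k+1} p_k`, and a half-open interval of length one contains `n a - m` for only one
integer `m`.
-/

open Finset

theorem irrational_of_eq_intCast_add_one_div {x y : ℝ} {n : ℤ} (hx : Irrational x)
    (h : x = n + 1 / y) : Irrational y := by
  rw [← irrational_inv_iff, ← one_div, show 1 / y = x - n by linarith]
  exact hx.sub_intCast n

theorem one_lt_of_eq_floor_add_one_div {x y : ℝ} {n : ℤ} (hx : Irrational x) (hn : n = ⌊x⌋)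
    (h : x = n + 1 / y) : 1 < y := by
  have hfract : 1 / y = Int.fract x := by rw [Int.fract, ← hn]; linarith
  have hpos : 0 < 1 / y := hfract ▸ Int.fract_pos.mpr (hx.ne_int _)
  have hlt : 1 / y < 1 := hfract ▸ Int.fract_lt_one x
  simpa using one_lt_one_div hpos hlt

theorem one_lt_complete_quotient {aCF : ℕ → ℤ} {ζ : ℕ → ℝ} (hζ0 : Irrational (ζ 0))
    (hfloor : ∀ k, aCF k = ⌊ζ k⌋) (hζ : ∀ k, ζ k = (aCF k : ℝ) + 1 / ζ (k + 1)) (k : ℕ) :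
    1 < ζ (k + 1) := by
  have hζ_irr (k : ℕ) : Irrational (ζ k) := by
    induction k with
    | zero => exact hζ0
    | succ k ih => exact irrational_of_eq_intCast_add_one_div ih (hζ k)
  exact one_lt_of_eq_floor_add_one_div (hζ_irr k) (hfloor k) (hζ k)

theorem mul_succ_eq_neg_of_recurrence {x c z : ℕ → ℝ} (hz : ∀ k, z k = c k + 1 / z (k + 1))
    (hz_ne : ∀ k, z (k + 1) ≠ 0) (hx0 : x 0 * z 1 = 1) (hx1 : x 1 = c 1 * x 0 - 1)
    (hrec : ∀ k, x (k + 2) = c (k + 2) * x (k + 1) + x k) :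
    ∀ k, x (k + 1) * z (k + 2) = -x k := by
  intro k
  induction k with
  | zero =>
    have h : z 1 = c 1 + 1 / z 2 := hz 1
    have hinv : z 2 * (1 / z 2) = 1 := mul_one_div_cancel (hz_ne 1)
    rw [hx1]
    linear_combination z 2 * hx0 - x 0 * z 2 * h - x 0 * hinv
  | succ k ih =>
    have h : z (k + 2) = c (k + 2) + 1 / z (k + 3) := hz (k + 2)
    have hinv : z (k + 3) * (1 / z (k + 3)) = 1 := mul_one_div_cancel (hz_ne (k + 2))
    rw [hrec]
    linear_combination z (k + 3) * ih - x (k + 1) * z (k + 3) * h - x (k + 1) * hinv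

theorem pos_even_and_neg_odd_of_mul_succ_eq_neg {x z : ℕ → ℝ} (hx0 : 0 < x 0)
    (hz : ∀ k, 0 < z k) (hstep : ∀ k, x (k + 1) * z k = -x k) :
    ∀ j, 0 < x (2 * j) ∧ x (2 * j + 1) < 0 := by
  intro j
  induction j with
  | zero =>
    have h0 : x 1 * z 0 = -x 0 := hstep 0
    show 0 < x 0 ∧ x 1 < 0
    exact ⟨hx0, neg_of_mul_neg_left (by linarith) (hz 0).le⟩
  | succ j ih =>
    show 0 < x (2 * j + 2) ∧ x (2 * j + 3) < 0
    have heven : 0 < x (2 * j + 2) :=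
      pos_of_mul_pos_left (by linarith [hstep (2 * j + 1), ih.2]) (hz (2 * j + 1)).le
    have hodd : x (2 * j + 3) * z (2 * j + 2) = -x (2 * j + 2) := hstep (2 * j + 2)
    exact ⟨heven, neg_of_mul_neg_left (by linarith) (hz (2 * j + 2)).le⟩

theorem finsum_digit_mul_eq_sum_range {R : Type*} [Semiring R] {b : ℕ → ℕ} {N : ℕ}
    (hb : ∀ k ≥ N, b (k + 1) = 0) (f : ℕ → R) :
    ∑ᶠ k, (b (k + 1) : R) * f k = ∑ k ∈ range N, (b (k + 1) : R) * f k := by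
  refine finsum_eq_sum_of_support_subset _ fun k hk => ?_
  by_contra hkN
  simp_all

theorem exists_digit_eq_zero_of_finite {b : ℕ → ℕ} (hfin : {k | b k ≠ 0}.Finite) :
    ∃ J, ∀ k ≥ 2 * J + 1, b (k + 1) = 0 := by
  obtain ⟨J, hJ⟩ := hfin.bddAbove
  refine ⟨J, fun k hk => ?_⟩
  by_contra hbk
  have : k + 1 ≤ J := hJ hbk
  omega

section Ostrowski

variable {β : ℕ → ℝ} {c : ℕ → ℤ} {b : ℕ → ℕ}

theorem sum_range_two_mul_succ_add_one (J : ℕ) :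
    ∑ k ∈ range (2 * (J + 1) + 1), (b (k + 1) : ℝ) * β k
      = ∑ k ∈ range (2 * J + 1), (b (k + 1) : ℝ) * β k
        + b (2 * J + 2) * β (2 * J + 1) + b (2 * J + 3) * β (2 * J + 2) := by
  rw [show 2 * (J + 1) + 1 = 2 * J + 1 + 1 + 1 by ring, sum_range_succ, sum_range_succ]

theorem sub_le_sum_range_digit_mul (hrec : ∀ k, β (k + 2) = c (k + 2) * β (k + 1) + β k)
    (hsign : ∀ j, 0 < β (2 * j) ∧ β (2 * j + 1) < 0) (hb1 : b 1 = 0)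
    (hle : ∀ k ≥ 2, (b k : ℤ) ≤ c k) (J : ℕ) :
    β (2 * J) - β 0 ≤ ∑ k ∈ range (2 * J + 1), (b (k + 1) : ℝ) * β k := by
  induction J with
  | zero => simp [hb1]
  | succ J ih =>
    rw [sum_range_two_mul_succ_add_one, mul_add, mul_one]
    have hodd : (c (2 * J + 2) : ℝ) * β (2 * J + 1) ≤ b (2 * J + 2) * β (2 * J + 1) :=
      mul_le_mul_of_nonpos_right (by exact_mod_cast hle _ (by omega)) (hsign J).2.le
    have heven : (0 : ℝ) ≤ b (2 * J + 3) * β (2 * J + 2) :=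
      mul_nonneg (Nat.cast_nonneg _) (hsign (J + 1)).1.le
    linarith [hrec (2 * J)]

theorem sum_range_digit_mul_le_sub (hrec : ∀ k, β (k + 2) = c (k + 2) * β (k + 1) + β k)
    (hsign : ∀ j, 0 < β (2 * j) ∧ β (2 * j + 1) < 0) (hb1 : b 1 = 0)
    (hle : ∀ k ≥ 2, (b k : ℤ) ≤ c k) (J : ℕ) :
    ∑ k ∈ range (2 * J + 1), (b (k + 1) : ℝ) * β k ≤ β (2 * J + 1) - β 1 := by
  induction J with
  | zero => simp [hb1]
  | succ J ih =>
    rw [sum_range_two_mul_succ_add_one, mul_add, mul_one]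
    have hodd : (b (2 * J + 2) : ℝ) * β (2 * J + 1) ≤ 0 :=
      mul_nonpos_of_nonneg_of_nonpos (Nat.cast_nonneg _) (hsign J).2.le
    have heven : (b (2 * J + 3) : ℝ) * β (2 * J + 2) ≤ c (2 * J + 3) * β (2 * J + 2) :=
      mul_le_mul_of_nonneg_right (by exact_mod_cast hle _ (by omega)) (hsign (J + 1)).1.le
    linarith [hrec (2 * J + 1)]

theorem finsum_digit_mul_mem_Ico (hrec : ∀ k, β (k + 2) = c (k + 2) * β (k + 1) + β k)
    (hsign : ∀ j, 0 < β (2 * j) ∧ β (2 * j + 1) < 0) (hfin : {k | b k ≠ 0}.Finite)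
    (hb1 : b 1 = 0) (hle : ∀ k ≥ 2, (b k : ℤ) ≤ c k) :
    ∑ᶠ k, (b (k + 1) : ℝ) * β k ∈ Set.Ico (-β 0) (-β 1) := by
  obtain ⟨J, hJ⟩ := exists_digit_eq_zero_of_finite hfin
  rw [finsum_digit_mul_eq_sum_range hJ]
  constructor
  · linarith [sub_le_sum_range_digit_mul hrec hsign hb1 hle J, (hsign J).1]
  · linarith [sum_range_digit_mul_le_sub hrec hsign hb1 hle J, (hsign J).2]

end Ostrowski

theorem finsum_digit_mul_sub {b : ℕ → ℕ} (hfin : {k | b k ≠ 0}.Finite) (q p : ℕ → ℤ) (a : ℝ) :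
    ∑ᶠ k, (b (k + 1) : ℝ) * (q k * a - p k)
      = ((∑ᶠ k, (b (k + 1) : ℤ) * q k : ℤ) : ℝ) * a - ((∑ᶠ k, (b (k + 1) : ℤ) * p k : ℤ) : ℝ) := by
  obtain ⟨J, hJ⟩ := exists_digit_eq_zero_of_finite hfin
  simp only [finsum_digit_mul_eq_sum_range hJ]
  push_cast
  simp only [mul_sub, sum_sub_distrib, sum_mul, mul_assoc]

theorem eq_of_sub_intCast_mem_Ico {x c d : ℝ} {m n : ℤ} (hcd : d ≤ c + 1)
    (hm : x - m ∈ Set.Ico c d) (hn : x - n ∈ Set.Ico c d) : m = n := by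
  have floor_eq {k : ℤ} (hk : x - k ∈ Set.Ico c d) : k = ⌊x - c⌋ := by
    rw [eq_comm, Int.floor_eq_iff]
    constructor <;> linarith [hk.1, hk.2]
  rw [floor_eq hm, floor_eq hn]

theorem f_eq_sum_beta_general (a : ℝ) (ha : Irrational a)
    (aCF : ℕ → ℤ) (ζ : ℕ → ℝ)
    (hζ0 : ζ 0 = a)
    (hfloor : ∀ k, aCF k = ⌊ζ k⌋)
    (hζ : ∀ k, ζ k = (aCF k : ℝ) + 1 / ζ (k + 1))
    (p q : ℕ → ℤ)
    (hq0 : q 0 = 1) (hq1 : q 1 = aCF 1)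
    (hqrec : ∀ k, q (k + 2) = aCF (k + 2) * q (k + 1) + q k)
    (hp0 : p 0 = aCF 0) (hp1 : p 1 = aCF 1 * aCF 0 + 1)
    (hprec : ∀ k, p (k + 2) = aCF (k + 2) * p (k + 1) + p k)
    (β : ℕ → ℝ)
    (hβ : ∀ k, β k = (q k : ℝ) * a - (p k : ℝ)) (h1 : 3 / 2 < a) (h2 : a < 2)
    (n : ℕ)
    (b : ℕ → ℕ)
    (hbfin : {k | b k ≠ 0}.Finite)
    (hb1 : (b 1 : ℤ) < aCF 1)
    (hble : ∀ k ≥ 1, (b k : ℤ) ≤ aCF k)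
    (hnrep : (n : ℤ) = ∑ᶠ k : ℕ, (b (k + 1) : ℤ) * q k) :
    ∀ m : ℕ, (n : ℝ) * a - (m : ℝ) ∈ Set.Ico (1 - a) (2 - a) →
      (n : ℝ) * a - (m : ℝ) = ∑ᶠ k : ℕ, (b (k + 1) : ℝ) * β k := by
  intro m hm
  have hζ_gt := one_lt_complete_quotient (hζ0 ▸ ha) hfloor hζ
  have hβ0 : β 0 * ζ 1 = 1 := by
    have h : a - aCF 0 = 1 / ζ 1 := by linarith [hζ0 ▸ hζ 0]
    rw [hβ, hq0, hp0, Int.cast_one, one_mul, h]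
    exact one_div_mul_cancel (zero_lt_one.trans (hζ_gt 0)).ne'
  have hβ1 : β 1 = aCF 1 * β 0 - 1 := by simp only [hβ, hq0, hq1, hp0, hp1]; push_cast; ring
  have hβrec (k : ℕ) : β (k + 2) = aCF (k + 2) * β (k + 1) + β k := by
    simp only [hβ, hqrec, hprec]; push_cast; ring
  have hsign := pos_even_and_neg_odd_of_mul_succ_eq_neg (z := fun k => ζ (k + 2))
    (by nlinarith [hζ_gt 0]) (fun k => by linarith [hζ_gt (k + 1)])
    (mul_succ_eq_neg_of_recurrence hζ (fun k => by linarith [hζ_gt k]) hβ0 hβ1 hβrec)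
  have ha0 : aCF 0 = 1 := by
    rw [hfloor, hζ0, Int.floor_eq_iff]; constructor <;> push_cast <;> linarith
  have hβ0_eq : β 0 = a - 1 := by rw [hβ, hq0, hp0, ha0]; push_cast; ring
  have ha1 : aCF 1 = 1 := by
    rw [hfloor, Int.floor_eq_iff]; constructor <;> push_cast <;> nlinarith [hζ_gt 0]
  have hβ1_eq : β 1 = a - 2 := by rw [hβ1, ha1, hβ0_eq]; push_cast; ring
  have hsum_mem := finsum_digit_mul_mem_Ico hβrec hsign hbfin (by omega)
    (fun k hk => hble k (by omega))
  rw [hβ0_eq, hβ1_eq, neg_sub, neg_sub] at hsum_mem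
  simp only [hβ, finsum_digit_mul_sub hbfin q p a, ← hnrep, Int.cast_natCast] at hsum_mem ⊢
  generalize (∑ᶠ k, (b (k + 1) : ℤ) * p k) = M at hsum_mem ⊢
  rw [eq_of_sub_intCast_mem_Ico (by linarith) hsum_mem (by exact_mod_cast hm), Int.cast_natCast]

theorem f_eq_sum_beta (a : ℝ) (ha : Irrational a)
    (aCF : ℕ → ℤ) (ζ : ℕ → ℝ)
    (hζ0 : ζ 0 = a)
    (hfloor : ∀ k, aCF k = ⌊ζ k⌋)
    (hζ : ∀ k, ζ k = (aCF k : ℝ) + 1 / ζ (k + 1))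
    (p q : ℕ → ℤ)
    (hq0 : q 0 = 1) (hq1 : q 1 = aCF 1)
    (hqrec : ∀ k, q (k + 2) = aCF (k + 2) * q (k + 1) + q k)
    (hp0 : p 0 = aCF 0) (hp1 : p 1 = aCF 1 * aCF 0 + 1)
    (hprec : ∀ k, p (k + 2) = aCF (k + 2) * p (k + 1) + p k)
    (β : ℕ → ℝ)
    (hβ : ∀ k, β k = (q k : ℝ) * a - (p k : ℝ)) (h1 : 3 / 2 < a) (h2 : a < 2)
    (n : ℕ)
    (b : ℕ → ℕ)
    (hbfin : {k | b k ≠ 0}.Finite)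
    (hb0 : b 0 = 0)
    (hb1 : (b 1 : ℤ) < aCF 1)
    (hble : ∀ k ≥ 1, (b k : ℤ) ≤ aCF k)
    (hbcons : ∀ k ≥ 2, (b k : ℤ) = aCF k → b (k - 1) = 0)
    (hnrep : (n : ℤ) = ∑ᶠ k : ℕ, (b (k + 1) : ℤ) * q k) :
    ∀ m : ℕ, (n : ℝ) * a - (m : ℝ) ∈ Set.Ico (1 - a) (2 - a) →
      (n : ℝ) * a - (m : ℝ) = ∑ᶠ k : ℕ, (b (k + 1) : ℝ) * β k :=
  f_eq_sum_beta_general a ha aCF ζ hζ0 hfloor hζ p q hq0 hq1 hqrec hp0 hp1 hprec β hβ h1 h2 n b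
    hbfin hb1 hble hnrep
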